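/- Let B(r) = 4 sech²(r) + K(r)^{-4} E(r)² sech⁴(r), where K(r) = √(tanh(r)/r) and E(r) = (e^{2r} - e^{-2r} - 4r)/(4r²). Then there exist constants c, C > 0 such that c ⟨r⟩^{-2} ≤ B(r) ≤ C ⟨r⟩^{-2} for all r > 0, where ⟨r⟩ = (1+r²)^{1/2}. -/
import Mathlib


open Real

/-- `K(r) = √(tanh r / r)`. -/
noncomputable def K (r : ℝ) : ℝ := Real.sqrt (Real.tanh r / r)

/-- `E(r) = (e^{2r} - e^{-2r} - 4r)/(4r²)`. -/
noncomputable def E (r : ℝ) : ℝ := (Real.exp (2 * r) - Real.exp (-(2 * r)) - 4 * r) / (4 * r ^ 2)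

/-- `B(r) = 4 sech²(r) + K(r)⁻⁴ E(r)² sech⁴(r)`. -/
noncomputable def B (r : ℝ) : ℝ :=
  4 * (Real.cosh r)⁻¹ ^ 2 + (K r) ^ (-(4 : ℤ)) * (E r) ^ 2 * (Real.cosh r)⁻¹ ^ 4

lemma sinh_le_mul_cosh {x : ℝ} (hx : 0 ≤ x) : Real.sinh x ≤ x * Real.cosh x := by
  have h : MonotoneOn (fun y : ℝ => y * Real.cosh y - Real.sinh y) (Set.Ici 0) := by
    apply monotoneOn_of_deriv_nonneg (convex_Ici 0)
    · fun_prop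
    · fun_prop
    · intro y hy
      rw [interior_Ici] at hy
      have h1 : HasDerivAt (fun y : ℝ => y * Real.cosh y - Real.sinh y)
          (1 * Real.cosh y + y * Real.sinh y - Real.cosh y) y :=
        ((hasDerivAt_id y).mul (Real.hasDerivAt_cosh y)).sub (Real.hasDerivAt_sinh y)
      rw [h1.deriv]
      have : 0 ≤ y * Real.sinh y := mul_nonneg hy.le (Real.sinh_pos_iff.2 hy).le
      linarith
  have := h (Set.self_mem_Ici) hx hx
  simpa using this

lemma B_eq {r : ℝ} (hr : 0 < r) :
    B r = 4 * (Real.cosh r)⁻¹ ^ 2 +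
      ((Real.sinh (2 * r) - 2 * r) / (r * Real.sinh (2 * r))) ^ 2 := by
  have hsr : 0 < Real.sinh r := Real.sinh_pos_iff.2 hr
  have hcr : 0 < Real.cosh r := Real.cosh_pos r
  have ht : 0 < Real.tanh r := by
    rw [Real.tanh_eq_sinh_div_cosh]; exact div_pos hsr hcr
  have hK4 : (K r) ^ (-(4 : ℤ)) = ((Real.tanh r / r) ^ 2)⁻¹ := by
    have : (K r) ^ (4 : ℕ) = (Real.tanh r / r) ^ 2 := by
      rw [K, show (4 : ℕ) = 2 * 2 from rfl, pow_mul,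
        Real.sq_sqrt (div_pos ht hr).le]
    rw [zpow_neg, show ((4:ℤ)) = ((4:ℕ):ℤ) from rfl, zpow_natCast, this]
  have hE : E r = (2 * Real.sinh (2 * r) - 4 * r) / (4 * r ^ 2) := by
    rw [E, Real.sinh_eq]; ring_nf
  have h2 : Real.sinh (2 * r) = 2 * Real.sinh r * Real.cosh r := Real.sinh_two_mul r
  rw [B, hK4, hE, Real.tanh_eq_sinh_div_cosh, h2]
  field_simp
  ring

lemma cosh_one_lt_two : Real.cosh 1 < 2 := by
  rw [Real.cosh_eq]
  have h1 : Real.exp 1 < 2.7182818286 := Real.exp_one_lt_d9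
  have h2 : Real.exp (-1) ≤ 1 := Real.exp_le_one_iff.2 (by norm_num)
  norm_num
  nlinarith

lemma cosh_two_lt_five : Real.cosh 2 < 5 := by
  rw [Real.cosh_eq]
  have h1 : Real.exp 1 < 2.7182818286 := Real.exp_one_lt_d9
  have h1' : 0 < Real.exp 1 := Real.exp_pos 1
  have he2 : Real.exp 2 = Real.exp 1 ^ 2 := by
    rw [← Real.exp_nat_mul]; norm_num
  have h2 : Real.exp (-2) ≤ 1 := Real.exp_le_one_iff.2 (by norm_num)
  nlinarith

lemma fifty_le_exp_four : (50 : ℝ) ≤ Real.exp 4 := by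
  have h1 : (2.7182818283 : ℝ) < Real.exp 1 := Real.exp_one_gt_d9
  have he4 : Real.exp 4 = Real.exp 1 ^ 4 := by
    rw [← Real.exp_nat_mul]; norm_num
  have hb : (2.7 : ℝ) ≤ Real.exp 1 := by linarith
  have h2 : (2.7 : ℝ) ^ 4 ≤ Real.exp 1 ^ 4 := pow_le_pow_left₀ (by norm_num) hb 4
  rw [he4]; nlinarith

set_option maxHeartbeats 1000000 in
/-- `B(r) ∼ ⟨r⟩⁻²` for all `r > 0`, where `⟨r⟩ = (1 + r²)^{1/2}`. -/
theorem stmt_13 :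
    ∃ c > (0 : ℝ), ∃ C > (0 : ℝ), ∀ r : ℝ, 0 < r →
      c * (1 + r ^ 2)⁻¹ ≤ B r ∧ B r ≤ C * (1 + r ^ 2)⁻¹ := by
  refine ⟨1/8, by norm_num, 136, by norm_num, fun r hr => ?_⟩
  have hB := B_eq hr
  set s := Real.sinh (2 * r) with hs
  have hs2r : 2 * r < s := Real.self_lt_sinh_iff.2 (by linarith)
  have hspos : 0 < s := by linarith
  have hcr : 0 < Real.cosh r := Real.cosh_pos r
  have h1r2 : 0 < 1 + r ^ 2 := by positivity
  set g := (s - 2 * r) / (r * s) with hg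
  have hg0 : 0 ≤ g := div_nonneg (by linarith) (by positivity)
  constructor
  · -- lower bound
    rcases le_or_gt r 2 with h2 | h2
    · have habs : |r| ≤ |(2 : ℝ)| := by
        rw [abs_of_pos hr, abs_of_pos (by norm_num : (0:ℝ) < 2)]; exact h2
      have hc2 : Real.cosh r ≤ Real.cosh 2 := Real.cosh_le_cosh.2 habs
      have hc5 : Real.cosh r < 5 := lt_of_le_of_lt hc2 cosh_two_lt_five
      have hinv : (5 : ℝ)⁻¹ ≤ (Real.cosh r)⁻¹ := by
        apply inv_anti₀ hcr hc5.le
      have h4 : 4 * (5 : ℝ)⁻¹ ^ 2 ≤ 4 * (Real.cosh r)⁻¹ ^ 2 := by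
        have := pow_le_pow_left₀ (by norm_num : (0:ℝ) ≤ (5:ℝ)⁻¹) hinv 2
        linarith
      have hr2 : (1 + r ^ 2)⁻¹ ≤ 1 := by
        rw [inv_le_one_iff₀]; right; linarith [sq_nonneg r]
      have hgsq : 0 ≤ g ^ 2 := sq_nonneg g
      rw [hB]
      have : (1:ℝ)/8 * (1 + r ^ 2)⁻¹ ≤ 1/8 := by linarith
      linarith
    · -- r > 2 : s ≥ 4r
      have hexp : Real.exp 4 * (2 * r - 3) ≤ Real.exp (2 * r) := by
        have h := Real.add_one_le_exp (2 * r - 4)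
        calc Real.exp 4 * (2 * r - 3) = Real.exp 4 * ((2 * r - 4) + 1) := by ring
          _ ≤ Real.exp 4 * Real.exp (2 * r - 4) := by
              apply mul_le_mul_of_nonneg_left h (Real.exp_pos 4).le
          _ = Real.exp (2 * r) := by rw [← Real.exp_add]; ring_nf
      have hexpneg : Real.exp (-(2 * r)) ≤ 1 := Real.exp_le_one_iff.2 (by linarith)
      have hs4 : 4 * r ≤ s := by
        rw [hs, Real.sinh_eq]
        nlinarith [fifty_le_exp_four, Real.exp_pos 4]
      have hghalf : 1 / (2 * r) ≤ g := by
        rw [hg, div_le_div_iff₀ (by positivity) (by positivity)]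
        nlinarith
      have hgsq : (1 / (2 * r)) ^ 2 ≤ g ^ 2 :=
        pow_le_pow_left₀ (by positivity) hghalf 2
      have key : (1:ℝ)/8 * (1 + r ^ 2)⁻¹ ≤ (1 / (2 * r)) ^ 2 := by
        have e1 : (1:ℝ)/8 * (1 + r ^ 2)⁻¹ = 1 / (8 * (1 + r ^ 2)) := by
          field_simp
        have e2 : ((1:ℝ) / (2 * r)) ^ 2 = 1 / (4 * r ^ 2) := by
          rw [div_pow, one_pow]; ring_nf
        rw [e1, e2, div_le_div_iff₀ (by positivity) (by positivity)]
        nlinarith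
      rw [hB]
      have hc0 : 0 ≤ 4 * (Real.cosh r)⁻¹ ^ 2 := by positivity
      linarith
  · -- upper bound
    have hgle : g ≤ 1 / r := by
      rw [hg, div_le_div_iff₀ (by positivity) hr]
      nlinarith
    rcases le_or_gt r 1 with h1 | h1
    · have hsl2 : Real.sinh r ≤ r * Real.cosh r := sinh_le_mul_cosh hr.le
      have hsl : s ≤ (2 * r) * Real.cosh (2 * r) := sinh_le_mul_cosh (by linarith)
      have hc2r : Real.cosh (2 * r) = 1 + 2 * Real.sinh r ^ 2 := by
        rw [Real.cosh_two_mul, Real.cosh_sq]; ring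
      have hsr0 : 0 ≤ Real.sinh r := (Real.sinh_pos_iff.2 hr).le
      have hnum : s - 2 * r ≤ 4 * r ^ 3 * (Real.cosh r) ^ 2 := by
        have hsq : Real.sinh r ^ 2 ≤ (r * Real.cosh r) ^ 2 := pow_le_pow_left₀ hsr0 hsl2 2
        nlinarith [mul_le_mul_of_nonneg_left hsq (by linarith : (0:ℝ) ≤ 4 * r)]
      have habs : |r| ≤ |(1 : ℝ)| := by
        rw [abs_of_pos hr, abs_of_pos (by norm_num : (0:ℝ) < 1)]; exact h1
      have hch1 : Real.cosh r < 2 := lt_of_le_of_lt (Real.cosh_le_cosh.2 habs) cosh_one_lt_two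
      have hgle8 : g ≤ 8 := by
        have step : g ≤ (4 * r ^ 3 * (Real.cosh r) ^ 2) / (2 * r ^ 2) := by
          apply div_le_div₀ (by positivity) hnum (by positivity)
          nlinarith
        have : (4 * r ^ 3 * (Real.cosh r) ^ 2) / (2 * r ^ 2) = 2 * r * (Real.cosh r) ^ 2 := by
          field_simp; ring
        rw [this] at step
        nlinarith
      have hgsq : g ^ 2 ≤ 64 := by nlinarith
      have hinv1 : (Real.cosh r)⁻¹ ≤ 1 := inv_le_one_of_one_le₀ (Real.one_le_cosh r)
      have hinv0 : 0 < (Real.cosh r)⁻¹ := by positivity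
      have hhalf : (1:ℝ)/2 ≤ (1 + r ^ 2)⁻¹ := by
        rw [inv_eq_one_div, div_le_div_iff₀ (by norm_num) h1r2]
        nlinarith
      have hcsq : (Real.cosh r)⁻¹ ^ 2 ≤ 1 := by
        calc (Real.cosh r)⁻¹ ^ 2 ≤ 1 ^ 2 := pow_le_pow_left₀ hinv0.le hinv1 2
          _ = 1 := one_pow 2
      rw [hB]
      linarith
    · have hrc : r ≤ Real.cosh r := by
        have h1 : r < Real.sinh r := Real.self_lt_sinh_iff.2 hr
        have h2 : Real.sinh r < Real.cosh r := Real.sinh_lt_cosh r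
        linarith
      have hinv : (Real.cosh r)⁻¹ ≤ r⁻¹ := inv_anti₀ hr hrc
      have hc2 : (Real.cosh r)⁻¹ ^ 2 ≤ (r ^ 2)⁻¹ := by
        rw [← inv_pow]
        exact pow_le_pow_left₀ (by positivity) hinv 2
      have hg2 : g ^ 2 ≤ (r ^ 2)⁻¹ := by
        calc g ^ 2 ≤ (1 / r) ^ 2 := pow_le_pow_left₀ hg0 hgle 2
          _ = (r ^ 2)⁻¹ := by rw [div_pow, one_pow, one_div]
      have key : 5 * (r ^ 2)⁻¹ ≤ 136 * (1 + r ^ 2)⁻¹ := by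
        rw [← div_eq_mul_inv, ← div_eq_mul_inv,
          div_le_div_iff₀ (by positivity) h1r2]
        nlinarith
      rw [hB]
      linarith
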